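/- Fix positive integers n_x, n_u, N, matrices 𝒜 ∈ ℝ^{(N+1)n_x × (N+1)n_x} and ℬ ∈ ℝ^{(N+1)n_x × (N+1)n_u}, and symmetric positive definite Q ∈ ℝ^{n_x×n_x}, R ∈ ℝ^{n_u×n_u}. For K ∈ ℝ^{n_u×n_x}, let 𝒜_c(K) := 𝒜 − ℬ(I_{N+1} ⊗ K). Let K₀ ∈ ℝ^{n_u×n_x} with 𝒜_c(K₀) Hurwitz, and suppose 𝒫 : ℝ^{n_u×n_x} → ℝ^{(N+1)n_x × (N+1)n_x} is a map, differentiable at K₀, taking symmetric values and satisfying the Lyapunov equation 𝒜_c(K)ᵀ𝒫(K) + 𝒫(K)𝒜_c(K) + I_{N+1} ⊗ (Q + KᵀRK) = 0 for all K in a neighborhood of K₀. Let ℐ := [I_{n_x}; 0; …; 0] ∈ ℝ^{(N+1)n_x × n_x} and let 𝒴 be a symmetric matrix satisfying 𝒜_c(K₀)𝒴 + 𝒴𝒜_c(K₀)ᵀ + ℐℐᵀ = 0. Define Ĵ(K) := Tr(𝒫(K)ℐℐᵀ) and ℋ := ℬᵀ𝒫(K₀). Then Ĵ is differentiable at K₀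 and its Fréchet derivative satisfies, for every E ∈ ℝ^{n_u×n_x}, dĴ(K₀)[E] = Tr(Eᵀ G), where G = 2·( R K₀ · Σ_{i=0}^{N} [𝒴]_{i,i} − Σ_{i=0}^{N} Σ_{j=0}^{N} [ℋ]_{i,j}[𝒴]_{j,i} ). -/

import Mathlib

open Matrix Kronecker

attribute [local instance] Matrix.frobeniusNormedAddCommGroup Matrix.frobeniusNormedSpace

/-- A square real matrix is Hurwitz if every eigenvalue of it, viewed as a complex
matrix, has negative real part. -/
def IsHurwitz {n : Type*} [Fintype n] [DecidableEq n] (A : Matrix n n ℝ) : Prop :=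
  ∀ μ ∈ spectrum ℂ (A.map (Complex.ofReal)), μ.re < 0

/-- The closed-loop matrix `𝒜 − ℬ (I_{N+1} ⊗ K)` of the lifted system. -/
noncomputable def acl {N nx nu : ℕ}
    (𝒜 : Matrix (Fin (N + 1) × Fin nx) (Fin (N + 1) × Fin nx) ℝ)
    (ℬ : Matrix (Fin (N + 1) × Fin nx) (Fin (N + 1) × Fin nu) ℝ)
    (K : Matrix (Fin nu) (Fin nx) ℝ) :
    Matrix (Fin (N + 1) × Fin nx) (Fin (N + 1) × Fin nx) ℝ :=
  𝒜 - ℬ * ((1 : Matrix (Fin (N + 1)) (Fin (N + 1)) ℝ) ⊗ₖ K)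

/-- The matrix `ℐ = [I_{n_x}; 0; …; 0] ∈ ℝ^{(N+1)n_x × n_x}`. -/
def iotaMat {N nx : ℕ} : Matrix (Fin (N + 1) × Fin nx) (Fin nx) ℝ :=
  Matrix.of fun p a => if p.1 = 0 then (1 : Matrix (Fin nx) (Fin nx) ℝ) p.2 a else 0

/-- The `(i,j)`-th block of an `(N+1)×(N+1)` block matrix with `a×b` blocks. -/
def blk {N a b : ℕ} (X : Matrix (Fin (N + 1) × Fin a) (Fin (N + 1) × Fin b) ℝ)
    (i j : Fin (N + 1)) : Matrix (Fin a) (Fin b) ℝ :=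
  Matrix.of fun s t => X (i, s) (j, t)

section Aux
variable {ι κ μ : Type*} [Fintype ι] [Fintype κ] [Fintype μ]

noncomputable def mulCLM (ι κ μ : Type*) [Fintype ι] [Fintype κ] [Fintype μ] :
    Matrix ι κ ℝ →L[ℝ] Matrix κ μ ℝ →L[ℝ] Matrix ι μ ℝ :=
  LinearMap.toContinuousLinearMap
    { toFun := fun A => LinearMap.toContinuousLinearMap
        { toFun := fun B => A * B
          map_add' := fun B C => Matrix.mul_add A B C
          map_smul' := fun r B => Matrix.mul_smul A r B }
      map_add' := fun A A' => by ext B; simp [Matrix.add_mul]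
      map_smul' := fun r A => by ext B; simp [Matrix.smul_mul] }

@[simp] lemma mulCLM_apply (A : Matrix ι κ ℝ) (B : Matrix κ μ ℝ) :
    mulCLM ι κ μ A B = A * B := rfl

noncomputable def transCLM (ι κ : Type*) [Fintype ι] [Fintype κ] :
    Matrix ι κ ℝ →L[ℝ] Matrix κ ι ℝ :=
  LinearMap.toContinuousLinearMap
    { toFun := fun A => Aᵀ
      map_add' := fun A B => Matrix.transpose_add A B
      map_smul' := fun r A => Matrix.transpose_smul r A }

@[simp] lemma transCLM_apply (A : Matrix ι κ ℝ) : transCLM ι κ A = Aᵀ := rfl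

noncomputable def kronCLM (ν ι κ : Type*) [Fintype ν] [Fintype ι] [Fintype κ] [DecidableEq ν] :
    Matrix ι κ ℝ →L[ℝ] Matrix (ν × ι) (ν × κ) ℝ :=
  LinearMap.toContinuousLinearMap
    { toFun := fun A => (1 : Matrix ν ν ℝ) ⊗ₖ A
      map_add' := fun A B => Matrix.kronecker_add _ A B
      map_smul' := fun r A => Matrix.kronecker_smul r _ A }

@[simp] lemma kronCLM_apply {ν : Type*} [Fintype ν] [DecidableEq ν] (A : Matrix ι κ ℝ) :
    kronCLM ν ι κ A = (1 : Matrix ν ν ℝ) ⊗ₖ A := rfl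

noncomputable def traceMulCLM {ι : Type*} [Fintype ι] (M : Matrix ι ι ℝ) :
    Matrix ι ι ℝ →L[ℝ] ℝ :=
  LinearMap.toContinuousLinearMap
    { toFun := fun X => (X * M).trace
      map_add' := fun X Y => by simp [Matrix.add_mul]
      map_smul' := fun r X => by simp [Matrix.smul_mul] }

@[simp] lemma traceMulCLM_apply (M : Matrix ι ι ℝ) (X : Matrix ι ι ℝ) :
    traceMulCLM M X = (X * M).trace := rfl

end Aux

section Blk
variable {N a b c : ℕ}

lemma trace_blk (X : Matrix (Fin (N + 1) × Fin a) (Fin (N + 1) × Fin a) ℝ) :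
    X.trace = ∑ i, (blk X i i).trace := by
  simp [Matrix.trace, blk, Matrix.diag, Fintype.sum_prod_type]

lemma blk_mul (X : Matrix (Fin (N + 1) × Fin a) (Fin (N + 1) × Fin b) ℝ)
    (Y : Matrix (Fin (N + 1) × Fin b) (Fin (N + 1) × Fin c) ℝ) (i j : Fin (N + 1)) :
    blk (X * Y) i j = ∑ k, blk X i k * blk Y k j := by
  ext s t
  simp [blk, Matrix.mul_apply, Matrix.sum_apply, Fintype.sum_prod_type]

lemma blk_one_kron (M : Matrix (Fin a) (Fin b) ℝ) (i j : Fin (N + 1)) :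
    blk ((1 : Matrix (Fin (N + 1)) (Fin (N + 1)) ℝ) ⊗ₖ M) i j = if i = j then M else 0 := by
  ext s t
  by_cases h : i = j <;> simp [blk, Matrix.one_apply, h]

lemma trace_kron_mul (M : Matrix (Fin a) (Fin b) ℝ)
    (X : Matrix (Fin (N + 1) × Fin b) (Fin (N + 1) × Fin a) ℝ) :
    (((1 : Matrix (Fin (N + 1)) (Fin (N + 1)) ℝ) ⊗ₖ M) * X).trace
      = ∑ i, (M * blk X i i).trace := by
  rw [trace_blk]
  congr 1; ext i
  rw [blk_mul, Matrix.trace_sum]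
  simp only [blk_one_kron]
  rw [Finset.sum_eq_single i]
  · simp
  · intro k _ hk
    simp [(Ne.symm hk : ¬ i = k)]
  · intro h
    exact absurd (Finset.mem_univ i) h

end Blk


set_option maxHeartbeats 2000000 in
/-- Gradient of the PCE-surrogate LQR cost
`Ĵ(K) = Tr(Pm(K)ℐℐᵀ)` at an admissible structured feedback gain `K₀`:
`dĴ(K₀)[E] = Tr(Eᵀ G)` with
`G = 2(RK₀ Σᵢ [Ym]_{i,i} − Σᵢⱼ [ℬᵀPm(K₀)]_{i,j}[Ym]_{j,i})`. -/
theorem surrogate_cost_gradient {nx nu N : ℕ}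
    (𝒜 : Matrix (Fin (N + 1) × Fin nx) (Fin (N + 1) × Fin nx) ℝ)
    (ℬ : Matrix (Fin (N + 1) × Fin nx) (Fin (N + 1) × Fin nu) ℝ)
    (Q : Matrix (Fin nx) (Fin nx) ℝ) (R : Matrix (Fin nu) (Fin nu) ℝ)
    (hQ : Q.PosDef) (hR : R.PosDef)
    (K₀ : Matrix (Fin nu) (Fin nx) ℝ)
    (hHurwitz : IsHurwitz (acl 𝒜 ℬ K₀))
    (Pm : Matrix (Fin nu) (Fin nx) ℝ →
      Matrix (Fin (N + 1) × Fin nx) (Fin (N + 1) × Fin nx) ℝ)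
    (hPmdiff : DifferentiableAt ℝ Pm K₀)
    (hPmsymm : ∀ K, (Pm K).IsHermitian)
    (ε : ℝ) (hε : 0 < ε)
    (hPmlyap : ∀ K : Matrix (Fin nu) (Fin nx) ℝ, ‖K - K₀‖ < ε →
      (acl 𝒜 ℬ K)ᵀ * Pm K + Pm K * acl 𝒜 ℬ K +
        (1 : Matrix (Fin (N + 1)) (Fin (N + 1)) ℝ) ⊗ₖ (Q + Kᵀ * R * K) = 0)
    (Ym : Matrix (Fin (N + 1) × Fin nx) (Fin (N + 1) × Fin nx) ℝ)
    (hYmsymm : Ym.IsHermitian)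
    (hYm : acl 𝒜 ℬ K₀ * Ym + Ym * (acl 𝒜 ℬ K₀)ᵀ + iotaMat * iotaMatᵀ = 0) :
    DifferentiableAt ℝ
        (fun K => (Pm K * ((iotaMat : Matrix (Fin (N + 1) × Fin nx) (Fin nx) ℝ) *
          iotaMatᵀ)).trace) K₀ ∧
      ∀ E : Matrix (Fin nu) (Fin nx) ℝ,
        fderiv ℝ
            (fun K => (Pm K * ((iotaMat : Matrix (Fin (N + 1) × Fin nx) (Fin nx) ℝ) *
              iotaMatᵀ)).trace) K₀ E =
          (Eᵀ * ((2 : ℝ) • (R * K₀ * ∑ i, blk Ym i i -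
            ∑ i, ∑ j, blk (ℬᵀ * Pm K₀) i j * blk Ym j i))).trace := by
    classical
  have hPm' : HasFDerivAt Pm (fderiv ℝ Pm K₀) K₀ := hPmdiff.hasFDerivAt
  set D := fderiv ℝ Pm K₀ with hD
  set M : Matrix (Fin (N + 1) × Fin nx) (Fin (N + 1) × Fin nx) ℝ :=
    (iotaMat : Matrix (Fin (N + 1) × Fin nx) (Fin nx) ℝ) * iotaMatᵀ with hMdef
  have hTM : HasFDerivAt
      (fun K => (Pm K * ((iotaMat : Matrix (Fin (N + 1) × Fin nx) (Fin nx) ℝ) *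
        iotaMatᵀ)).trace) ((traceMulCLM M).comp D) K₀ :=
    ((traceMulCLM M).hasFDerivAt).comp K₀ hPm'
  refine ⟨hTM.differentiableAt, fun E => ?_⟩
  rw [hTM.fderiv]
  show (D E * M).trace = _
  -- Step B: differentiate the Lyapunov equation
  set L : Matrix (Fin nu) (Fin nx) ℝ →L[ℝ]
      Matrix (Fin (N + 1) × Fin nx) (Fin (N + 1) × Fin nx) ℝ :=
    (mulCLM (Fin (N + 1) × Fin nx) (Fin (N + 1) × Fin nu) (Fin (N + 1) × Fin nx) ℬ).comp
      (kronCLM (Fin (N + 1)) (Fin nu) (Fin nx)) with hLdef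
  have h_acl : HasFDerivAt (acl 𝒜 ℬ) (-L) K₀ := by
    exact (L.hasFDerivAt (x := K₀)).const_sub 𝒜
  have h_aclT' := ((transCLM (Fin (N + 1) × Fin nx) (Fin (N + 1) × Fin nx)).hasFDerivAt
      (x := acl 𝒜 ℬ K₀)).comp K₀ h_acl
  have h_aclT : HasFDerivAt (fun K => (acl 𝒜 ℬ K)ᵀ)
      ((transCLM _ _).comp (-L)) K₀ := h_aclT'
  have ht1 : HasFDerivAt (fun K => (acl 𝒜 ℬ K)ᵀ * Pm K)
      ((mulCLM _ _ _).precompR _ ((acl 𝒜 ℬ K₀)ᵀ) D +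
        (mulCLM _ _ _).precompL _ ((transCLM _ _).comp (-L)) (Pm K₀)) K₀ :=
    (mulCLM _ _ _).hasFDerivAt_of_bilinear h_aclT hPm'
  have ht2 : HasFDerivAt (fun K => Pm K * acl 𝒜 ℬ K)
      ((mulCLM _ _ _).precompR _ (Pm K₀) (-L) +
        (mulCLM _ _ _).precompL _ D (acl 𝒜 ℬ K₀)) K₀ :=
    (mulCLM _ _ _).hasFDerivAt_of_bilinear hPm' h_acl
  have hKR : HasFDerivAt (fun K : Matrix (Fin nu) (Fin nx) ℝ => Kᵀ * R)
      (((mulCLM _ _ _).flip R).comp (transCLM _ _)) K₀ :=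
    ((((mulCLM (Fin nx) (Fin nu) (Fin nu)).flip R).comp
      (transCLM (Fin nu) (Fin nx))).hasFDerivAt (x := K₀))
  have hKRK : HasFDerivAt (fun K : Matrix (Fin nu) (Fin nx) ℝ => Kᵀ * R * K)
      ((mulCLM _ _ _).precompR _ (K₀ᵀ * R) (ContinuousLinearMap.id ℝ _) +
        (mulCLM _ _ _).precompL _ (((mulCLM _ _ _).flip R).comp (transCLM _ _)) K₀) K₀ :=
    (mulCLM _ _ _).hasFDerivAt_of_bilinear hKR (hasFDerivAt_id K₀)
  have ht3 : HasFDerivAt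
      (fun K : Matrix (Fin nu) (Fin nx) ℝ =>
        (1 : Matrix (Fin (N + 1)) (Fin (N + 1)) ℝ) ⊗ₖ (Q + Kᵀ * R * K))
      ((kronCLM (Fin (N + 1)) (Fin nx) (Fin nx)).comp
        ((mulCLM _ _ _).precompR _ (K₀ᵀ * R) (ContinuousLinearMap.id ℝ _) +
          (mulCLM _ _ _).precompL _ (((mulCLM _ _ _).flip R).comp (transCLM _ _)) K₀)) K₀ := by
    have := ((kronCLM (Fin (N + 1)) (Fin nx) (Fin nx)).hasFDerivAt
        (x := Q + K₀ᵀ * R * K₀)).comp K₀ (hKRK.const_add Q)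
    exact this
  have hF : HasFDerivAt (fun K => (acl 𝒜 ℬ K)ᵀ * Pm K + Pm K * acl 𝒜 ℬ K +
      (1 : Matrix (Fin (N + 1)) (Fin (N + 1)) ℝ) ⊗ₖ (Q + Kᵀ * R * K)) _ K₀ :=
    (ht1.add ht2).add ht3
  have hev : (fun K => (acl 𝒜 ℬ K)ᵀ * Pm K + Pm K * acl 𝒜 ℬ K +
      (1 : Matrix (Fin (N + 1)) (Fin (N + 1)) ℝ) ⊗ₖ (Q + Kᵀ * R * K))
      =ᶠ[nhds K₀] (fun _ => (0 : Matrix (Fin (N + 1) × Fin nx) (Fin (N + 1) × Fin nx) ℝ)) := by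
    filter_upwards [Metric.ball_mem_nhds K₀ hε] with K hK
    exact hPmlyap K (by simpa [dist_eq_norm] using hK)
  have hzero := hF.fderiv
  rw [hev.fderiv_eq, fderiv_fun_const] at hzero
  have h0 := congrArg (fun Φ => Φ E) hzero.symm
  simp only [ContinuousLinearMap.add_apply, ContinuousLinearMap.comp_apply,
    ContinuousLinearMap.precompR_apply, ContinuousLinearMap.precompL_apply,
    ContinuousLinearMap.neg_apply, ContinuousLinearMap.flip_apply,
    ContinuousLinearMap.id_apply, ContinuousLinearMap.zero_apply, Pi.zero_apply,
    ContinuousLinearMap.compL_apply,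
    mulCLM_apply, transCLM_apply, kronCLM_apply, ContinuousLinearMap.coe_zero] at h0
  rw [hLdef] at h0
  change (acl 𝒜 ℬ K₀)ᵀ * D E
      + (-(ℬ * ((1 : Matrix (Fin (N + 1)) (Fin (N + 1)) ℝ) ⊗ₖ E)))ᵀ * Pm K₀
      + (Pm K₀ * -(ℬ * ((1 : Matrix (Fin (N + 1)) (Fin (N + 1)) ℝ) ⊗ₖ E))
        + D E * acl 𝒜 ℬ K₀)
      + (1 : Matrix (Fin (N + 1)) (Fin (N + 1)) ℝ) ⊗ₖ (K₀ᵀ * R * E + Eᵀ * R * K₀) = 0 at h0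
  -- rearranged key identity
  have hkey : (acl 𝒜 ℬ K₀)ᵀ * D E + D E * acl 𝒜 ℬ K₀
      = (ℬ * ((1 : Matrix (Fin (N + 1)) (Fin (N + 1)) ℝ) ⊗ₖ E))ᵀ * Pm K₀
        + Pm K₀ * (ℬ * ((1 : Matrix (Fin (N + 1)) (Fin (N + 1)) ℝ) ⊗ₖ E))
        - (1 : Matrix (Fin (N + 1)) (Fin (N + 1)) ℝ) ⊗ₖ (K₀ᵀ * R * E + Eᵀ * R * K₀) := by
    rw [← sub_eq_zero, ← h0]
    rw [Matrix.transpose_neg, Matrix.neg_mul, Matrix.mul_neg]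
    abel
  -- symmetry facts
  have hPT : (Pm K₀)ᵀ = Pm K₀ := by
    rw [← Matrix.conjTranspose_eq_transpose_of_trivial]; exact hPmsymm K₀
  have hRT : Rᵀ = R := by
    rw [← Matrix.conjTranspose_eq_transpose_of_trivial]; exact hR.1
  have hYT : Ymᵀ = Ym := by
    rw [← Matrix.conjTranspose_eq_transpose_of_trivial]; exact hYmsymm
  have hYblkT : ∀ i : Fin (N + 1), (blk Ym i i)ᵀ = blk Ym i i := by
    intro i; ext s t
    have := congrFun (congrFun hYT (i, s)) (i, t)
    simpa [blk, Matrix.transpose_apply] using this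
  set P := Pm K₀ with hPdef
  set Ac := acl 𝒜 ℬ K₀ with hAcdef
  set a := ℬ * ((1 : Matrix (Fin (N + 1)) (Fin (N + 1)) ℝ) ⊗ₖ E) with hadef
  have haT : aᵀ = ((1 : Matrix (Fin (N + 1)) (Fin (N + 1)) ℝ) ⊗ₖ Eᵀ) * ℬᵀ := by
    rw [hadef, Matrix.transpose_mul]
    congr 1
    rw [← Matrix.kroneckerMap_transpose, Matrix.transpose_one]
  have hM : M = -(Ac * Ym + Ym * Acᵀ) := eq_neg_of_add_eq_zero_right hYm
  -- step 1 : Tr(DE * M) = - Tr((Acᵀ DE + DE Ac) Ym)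
  have e1 : (D E * (Ym * Acᵀ)).trace = ((Acᵀ * D E) * Ym).trace := by
    calc (D E * (Ym * Acᵀ)).trace = ((D E * Ym) * Acᵀ).trace := by rw [Matrix.mul_assoc]
      _ = (Acᵀ * (D E * Ym)).trace := Matrix.trace_mul_comm _ _
      _ = ((Acᵀ * D E) * Ym).trace := by rw [Matrix.mul_assoc]
  have step1 : (D E * M).trace = -(((Acᵀ * D E + D E * Ac) * Ym).trace) := by
    rw [hM, Matrix.mul_neg, Matrix.trace_neg]
    congr 1
    rw [Matrix.mul_add, Matrix.trace_add, Matrix.add_mul, Matrix.trace_add,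
      ← Matrix.mul_assoc, e1]
    ring
  -- step 2 : insert key identity
  have step2 : (D E * M).trace
      = ((1 : Matrix (Fin (N + 1)) (Fin (N + 1)) ℝ) ⊗ₖ (K₀ᵀ * R * E + Eᵀ * R * K₀) * Ym).trace
        - ((aᵀ * P) * Ym).trace - ((P * a) * Ym).trace := by
    rw [step1, hkey, Matrix.sub_mul, Matrix.add_mul, Matrix.trace_sub, Matrix.trace_add]
    ring
  -- step 3 : Tr(P a Ym) = Tr(aᵀ P Ym)
  have step3 : ((P * a) * Ym).trace = ((aᵀ * P) * Ym).trace := by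
    calc ((P * a) * Ym).trace = (((P * a) * Ym)ᵀ).trace := (Matrix.trace_transpose _).symm
      _ = (Ymᵀ * (aᵀ * Pᵀ)).trace := by rw [Matrix.transpose_mul, Matrix.transpose_mul]
      _ = (Ym * (aᵀ * P)).trace := by rw [hYT, hPT]
      _ = ((aᵀ * P) * Ym).trace := Matrix.trace_mul_comm _ _
  -- step 4 : Tr(aᵀ P Ym) in blocks
  have step4 : ((aᵀ * P) * Ym).trace
      = ∑ i, ∑ j, (Eᵀ * (blk (ℬᵀ * P) i j * blk Ym j i)).trace := by
    rw [haT, Matrix.mul_assoc, Matrix.mul_assoc, ← Matrix.mul_assoc ℬᵀ P Ym,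
      trace_kron_mul]
    congr 1; ext i
    rw [blk_mul, Matrix.mul_sum, Matrix.trace_sum]
  -- step 5 : the Kronecker-Q term in blocks
  have e5 : ∀ i : Fin (N + 1), ((K₀ᵀ * R * E) * blk Ym i i).trace
      = ((Eᵀ * R * K₀) * blk Ym i i).trace := by
    intro i
    calc ((K₀ᵀ * R * E) * blk Ym i i).trace
        = (((K₀ᵀ * R * E) * blk Ym i i)ᵀ).trace := (Matrix.trace_transpose _).symm
      _ = ((blk Ym i i)ᵀ * (Eᵀ * ((K₀ᵀ * R)ᵀ))).trace := by
          rw [Matrix.transpose_mul, Matrix.transpose_mul]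
      _ = (blk Ym i i * (Eᵀ * (R * K₀))).trace := by
          rw [hYblkT, Matrix.transpose_mul, Matrix.transpose_transpose, hRT]
      _ = ((Eᵀ * (R * K₀)) * blk Ym i i).trace := Matrix.trace_mul_comm _ _
      _ = ((Eᵀ * R * K₀) * blk Ym i i).trace := by rw [← Matrix.mul_assoc Eᵀ R K₀]
  have step5 : ((1 : Matrix (Fin (N + 1)) (Fin (N + 1)) ℝ) ⊗ₖ (K₀ᵀ * R * E + Eᵀ * R * K₀)
      * Ym).trace = ∑ i, 2 * ((Eᵀ * R * K₀) * blk Ym i i).trace := by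
    rw [trace_kron_mul]
    congr 1; ext i
    rw [Matrix.add_mul, Matrix.trace_add, e5]
    ring
  -- assemble
  rw [step2, step3, step4, step5]
  -- now pure algebra of sums/traces
  rw [two_smul]
  simp only [two_mul, Matrix.mul_add, Matrix.mul_sub, Matrix.mul_sum, Matrix.trace_add,
    Matrix.trace_sub, Matrix.trace_sum, Matrix.mul_assoc, Finset.sum_add_distrib]
  ring
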